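/- arXiv:1711.03783 — 2 statements merged into one kernel-verified Lean document; each statement's English description precedes it below -/
import Mathlib

section
/- Let A ∈ ℝ^{m×n} with rank(A) = m < n. Suppose there exist constants C₁, C₂ ≥ 0 such that for every τ ≥ 0, every y ∈ ℝ^m, and every x ∈ ℝⁿ with ‖Aᵀ(Ax − y)‖_∞ ≤ τ, there exists an optimal solution x* of the standard Dantzig selector problem min{‖z‖₁ : ‖Aᵀ(Az − y)‖_∞ ≤ τ} satisfying ‖x − x*‖₂ ≤ C₁·σ_k(x)₁ + C₂·τ. Then Aᵀ satisfies the weak range space property (weak RSP) of order k. -/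
/-!
Apply the stability hypothesis with `τ = 0` and `y = A x` to the sign pattern `x` of `(S₁, S₂)`.
Since `x` is `k`-sparse, `σ_k(x)₁ = 0`, so the Dantzig selector returns `x` itself: `x` minimizes
`‖·‖₁` on `x + ker A`. By Hahn–Banach there is a functional bounded by `‖·‖₁`, vanishing on `ker A`
and equal to `‖x‖₁` at `x`. It is of the form `z ↦ (Aᵀ u) ⬝ᵥ z`, and `‖Aᵀ u‖_∞ ≤ 1` together with
`(Aᵀ u) ⬝ᵥ x = ‖x‖₁` forces `Aᵀ u` to agree with `x` on `S₁ ∪ S₂`.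
-/

open Matrix
open scoped Classical

/-- The ℓ₁ norm on `Fin n → ℝ`. -/
noncomputable def l1norm {n : ℕ} (x : Fin n → ℝ) : ℝ := ∑ i, |x i|

/-- The Euclidean (ℓ₂) norm on `Fin n → ℝ`. -/
noncomputable def l2norm {n : ℕ} (x : Fin n → ℝ) : ℝ := Real.sqrt (∑ i, (x i) ^ 2)

/-- The ℓ_∞ norm on `Fin n → ℝ`. -/
noncomputable def linfnorm {n : ℕ} (x : Fin n → ℝ) : ℝ := ⨆ i, |x i|

/-- The best `k`-term approximation error `σ_k(x)₁`. -/
noncomputable def bestKTerm {n : ℕ} (k : ℕ) (x : Fin n → ℝ) : ℝ :=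
  sInf {t : ℝ | ∃ u : Fin n → ℝ,
    (Finset.univ.filter (fun i => u i ≠ 0)).card ≤ k ∧ t = l1norm (x - u)}

/-- `Aᵀ` satisfies the weak range space property of order `k`. -/
def WeakRSP {m n : ℕ} (A : Matrix (Fin m) (Fin n) ℝ) (k : ℕ) : Prop :=
  ∀ S₁ S₂ : Finset (Fin n), Disjoint S₁ S₂ → S₁.card + S₂.card ≤ k →
    ∃ u : Fin m → ℝ,
      (∀ i ∈ S₁, Aᵀ.mulVec u i = 1) ∧
      (∀ i ∈ S₂, Aᵀ.mulVec u i = -1) ∧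
      (∀ i, i ∉ S₁ → i ∉ S₂ → |Aᵀ.mulVec u i| ≤ 1)

theorem Seminorm.exists_dual_eq_of_forall_le_add {E : Type*} [AddCommGroup E] [Module ℝ E]
    (p : Seminorm ℝ E) (V : Submodule ℝ E) {x : E} (hmin : ∀ v ∈ V, p x ≤ p (x + v)) :
    ∃ g : Module.Dual ℝ E, (∀ v ∈ V, g v = 0) ∧ (∀ z, |g z| ≤ p z) ∧ g x = p x := by
  by_cases hxV : x ∈ V
  · have hpx : p x ≤ 0 := by simpa using hmin (-x) (V.neg_mem hxV)
    exact ⟨0, fun _ _ => rfl, fun z => by simp, by simp [le_antisymm hpx (apply_nonneg p x)]⟩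
  set f := LinearPMap.supSpanSingleton (⟨V, 0⟩ : E →ₗ.[ℝ] ℝ) x (p x) hxV
  have hf : ∀ w : f.domain, f w ≤ p w := by
    rintro ⟨w, hw⟩
    obtain ⟨v, hv, _, hs, rfl⟩ := Submodule.mem_sup.mp hw
    obtain ⟨t, rfl⟩ := Submodule.mem_span_singleton.mp hs
    rw [LinearPMap.supSpanSingleton_apply_mk _ _ _ hxV v hv t]
    suffices t * p x ≤ p (v + t • x) by simpa using this
    rcases eq_or_ne t 0 with rfl | ht
    · simp
    calc t * p x ≤ |t| * p x := mul_le_mul_of_nonneg_right (le_abs_self t) (apply_nonneg p x)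
      _ ≤ |t| * p (x + t⁻¹ • v) :=
        mul_le_mul_of_nonneg_left (hmin _ (V.smul_mem _ hv)) (abs_nonneg t)
      _ = p (v + t • x) := by
        rw [← Real.norm_eq_abs, ← map_smul_eq_mul p, smul_add, smul_inv_smul₀ ht, add_comm]
  obtain ⟨g, hgf, hgp⟩ := Module.Dual.exists_extension_of_le_seminorm_real f.domain f.toFun hf
  refine ⟨g, fun v hv => ?_, hgp, ?_⟩
  · rw [hgf ⟨v, Submodule.mem_sup_left hv⟩, LinearPMap.toFun_eq_coe,
      LinearPMap.supSpanSingleton_apply_mk_of_mem _ _ _ (show v ∈ V from hv)]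
    rfl
  · rw [hgf ⟨x, Submodule.mem_sup_right (Submodule.mem_span_singleton_self x)⟩,
      LinearPMap.toFun_eq_coe, LinearPMap.supSpanSingleton_apply_self]

theorem Matrix.exists_eq_transpose_mulVec_dotProduct_of_ker_le {K m n : Type*} [Field K]
    [Fintype m] [Fintype n] [DecidableEq m] (A : Matrix m n K) (g : Module.Dual K (n → K))
    (hg : ∀ z, A *ᵥ z = 0 → g z = 0) : ∃ u : m → K, ∀ z, g z = (Aᵀ *ᵥ u) ⬝ᵥ z := by
  have hg' : g ∈ (LinearMap.ker A.mulVecLin).dualAnnihilator :=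
    (Submodule.mem_dualAnnihilator g).mpr fun z hz => hg z hz
  rw [← LinearMap.range_dualMap_eq_dualAnnihilator_ker] at hg'
  obtain ⟨h, rfl⟩ := hg'
  obtain ⟨u, rfl⟩ := (dotProductEquiv K m).surjective h
  exact ⟨u, fun z => by simp [dotProduct_mulVec, mulVec_transpose]⟩

theorem l1norm_nonneg {n : ℕ} (x : Fin n → ℝ) : 0 ≤ l1norm x :=
  Finset.sum_nonneg fun _ _ => abs_nonneg _

theorem l1norm_add_le {n : ℕ} (x y : Fin n → ℝ) : l1norm (x + y) ≤ l1norm x + l1norm y := by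
  rw [l1norm, l1norm, l1norm, ← Finset.sum_add_distrib]
  exact Finset.sum_le_sum fun i _ => abs_add_le _ _

theorem l1norm_smul {n : ℕ} (c : ℝ) (x : Fin n → ℝ) : l1norm (c • x) = ‖c‖ * l1norm x := by
  simp [l1norm, abs_mul, Finset.mul_sum]

theorem l1norm_single {n : ℕ} (i : Fin n) : l1norm (Pi.single i 1) = 1 := by
  simp [l1norm, Pi.single_apply, apply_ite abs]

noncomputable def l1Seminorm (n : ℕ) : Seminorm ℝ (Fin n → ℝ) :=
  Seminorm.of l1norm l1norm_add_le l1norm_smul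

@[simp]
theorem l1Seminorm_apply {n : ℕ} (x : Fin n → ℝ) : l1Seminorm n x = l1norm x := rfl

theorem exists_dual_certificate_of_forall_l1norm_le_add {m n : ℕ}
    (A : Matrix (Fin m) (Fin n) ℝ) {x : Fin n → ℝ}
    (hmin : ∀ h, A *ᵥ h = 0 → l1norm x ≤ l1norm (x + h)) :
    ∃ u : Fin m → ℝ, (∀ i, |(Aᵀ *ᵥ u) i| ≤ 1) ∧ (Aᵀ *ᵥ u) ⬝ᵥ x = l1norm x := by
  obtain ⟨g, hker, hbound, hgx⟩ := (l1Seminorm n).exists_dual_eq_of_forall_le_add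
    (LinearMap.ker A.mulVecLin) (x := x) fun h hh => by simpa using hmin h hh
  obtain ⟨u, hu⟩ := A.exists_eq_transpose_mulVec_dotProduct_of_ker_le g fun z hz => hker z hz
  refine ⟨u, fun i => ?_, by simpa [hu] using hgx⟩
  simpa [hu, l1norm_single] using hbound (Pi.single i 1)

theorem mul_eq_abs_of_dotProduct_eq_l1norm {n : ℕ} {ζ x : Fin n → ℝ} (hζ : ∀ i, |ζ i| ≤ 1)
    (hζx : ζ ⬝ᵥ x = l1norm x) (i : Fin n) : ζ i * x i = |x i| := by
  have hle : ∀ j ∈ Finset.univ, ζ j * x j ≤ |x j| := fun j _ =>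
    calc ζ j * x j ≤ |ζ j| * |x j| := by rw [← abs_mul]; exact le_abs_self _
      _ ≤ |x j| := mul_le_of_le_one_left (abs_nonneg _) (hζ j)
  exact (Finset.sum_eq_sum_iff_of_le hle).mp hζx i (Finset.mem_univ i)

theorem linfnorm_zero {n : ℕ} : linfnorm (0 : Fin n → ℝ) = 0 := by
  simp [linfnorm]

theorem l2norm_le_zero_iff {n : ℕ} {x : Fin n → ℝ} : l2norm x ≤ 0 ↔ x = 0 := by
  have hx : l2norm x = ‖WithLp.toLp 2 x‖ := by simp [l2norm, EuclideanSpace.norm_eq]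
  rw [hx, norm_le_zero_iff, WithLp.toLp_eq_zero]

theorem bestKTerm_eq_zero_of_card_support_le {n k : ℕ} {x : Fin n → ℝ}
    (hx : (Finset.univ.filter fun i => x i ≠ 0).card ≤ k) : bestKTerm k x = 0 := by
  have hzero : (0 : ℝ) ∈ {t : ℝ | ∃ u : Fin n → ℝ,
      (Finset.univ.filter fun i => u i ≠ 0).card ≤ k ∧ t = l1norm (x - u)} :=
    ⟨x, hx, by simp [l1norm]⟩
  refine le_antisymm (csInf_le ⟨0, ?_⟩ hzero) (le_csInf ⟨0, hzero⟩ ?_) <;>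
    rintro t ⟨u, -, rfl⟩ <;> exact l1norm_nonneg _

def signPattern {n : ℕ} (S₁ S₂ : Finset (Fin n)) : Fin n → ℝ :=
  fun i => if i ∈ S₁ then 1 else if i ∈ S₂ then -1 else 0

theorem card_support_signPattern_le {n : ℕ} (S₁ S₂ : Finset (Fin n)) :
    (Finset.univ.filter fun i => signPattern S₁ S₂ i ≠ 0).card ≤ S₁.card + S₂.card := by
  refine (Finset.card_le_card fun i hi => ?_).trans (Finset.card_union_le S₁ S₂)
  rw [Finset.mem_filter] at hi
  by_contra hi'
  rw [Finset.mem_union, not_or] at hi'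
  simp [signPattern, hi'.1, hi'.2] at hi

theorem standard_DS_stability_implies_weakRSP_general (m n k : ℕ)
    (A : Matrix (Fin m) (Fin n) ℝ)
    (C₁ C₂ : ℝ)
    (hstable : ∀ τ : ℝ, 0 ≤ τ → ∀ y : Fin m → ℝ, ∀ x : Fin n → ℝ,
      linfnorm (Aᵀ.mulVec (A.mulVec x - y)) ≤ τ →
      ∃ xstar : Fin n → ℝ,
        (linfnorm (Aᵀ.mulVec (A.mulVec xstar - y)) ≤ τ ∧
          ∀ z : Fin n → ℝ, linfnorm (Aᵀ.mulVec (A.mulVec z - y)) ≤ τ →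
            l1norm xstar ≤ l1norm z) ∧
        l2norm (x - xstar) ≤ C₁ * bestKTerm k x + C₂ * τ) :
    WeakRSP A k := by
  intro S₁ S₂ hdisj hk
  set x := signPattern S₁ S₂
  have hbest : bestKTerm k x = 0 :=
    bestKTerm_eq_zero_of_card_support_le ((card_support_signPattern_le S₁ S₂).trans hk)
  obtain ⟨xstar, ⟨-, hopt⟩, herr⟩ := hstable 0 le_rfl (A *ᵥ x) x (by simp [linfnorm_zero])
  have hxstar : x = xstar := sub_eq_zero.mp (l2norm_le_zero_iff.mp (by simpa [hbest] using herr))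
  have hmin : ∀ h, A *ᵥ h = 0 → l1norm x ≤ l1norm (x + h) := fun h hh =>
    hxstar ▸ hopt (x + h) (by simp [mulVec_add, hh, linfnorm_zero])
  obtain ⟨u, hbound, hcert⟩ := exists_dual_certificate_of_forall_l1norm_le_add A hmin
  have hsign := mul_eq_abs_of_dotProduct_eq_l1norm hbound hcert
  refine ⟨u, fun i hi => ?_, fun i hi => ?_, fun i _ _ => hbound i⟩
  · have hxi : x i = 1 := by simp [x, signPattern, hi]
    simpa [hxi] using hsign i
  · have hxi : x i = -1 := by simp [x, signPattern, hi, Finset.disjoint_right.mp hdisj hi]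
    have := hsign i
    rw [hxi, abs_neg, abs_one] at this
    linarith

/-- Corollary 3.4 (converse direction): if the standard Dantzig selector is stable
with error bound `C₁ σ_k(x)₁ + C₂ τ` for all `τ ≥ 0`, all `y` and all feasible `x`,
then `Aᵀ` satisfies the weak RSP of order `k`. -/
theorem standard_DS_stability_implies_weakRSP (m n k : ℕ) (hmn : m < n)
    (A : Matrix (Fin m) (Fin n) ℝ) (hArank : A.rank = m)
    (C₁ C₂ : ℝ) (hC₁ : 0 ≤ C₁) (hC₂ : 0 ≤ C₂)
    (hstable : ∀ τ : ℝ, 0 ≤ τ → ∀ y : Fin m → ℝ, ∀ x : Fin n → ℝ,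
      linfnorm (Aᵀ.mulVec (A.mulVec x - y)) ≤ τ →
      ∃ xstar : Fin n → ℝ,
        (linfnorm (Aᵀ.mulVec (A.mulVec xstar - y)) ≤ τ ∧
          ∀ z : Fin n → ℝ, linfnorm (Aᵀ.mulVec (A.mulVec z - y)) ≤ τ →
            l1norm xstar ≤ l1norm z) ∧
        l2norm (x - xstar) ≤ C₁ * bestKTerm k x + C₂ * τ) :
    WeakRSP A k :=
  standard_DS_stability_implies_weakRSP_general m n k A C₁ C₂ hstable
end

section
/- Let A ∈ ℝ^{m×n}, M ∈ ℝ^{m×q}, y ∈ ℝ^m and μ > 0, let ρ* be the optimal value of the LASSO problem min{φ(Mᵀ(Ax − y)) : ‖x‖₁ ≤ μ}, and let Λ* = {x ∈ ℝⁿ : ‖x‖₁ ≤ μ, φ(Mᵀ(Ax − y)) ≤ ρ*} denote its solution set. Let (ε_j)_{j≥1} be a strictly decreasing sequence of positive numbers with ε_j → 0, and for each j let Q_j = ⋂_{i ∈ I_j} {u ∈ ℝ^q : (a^{j,i})ᵀu ≤ 1} be a polytope defined by finitely many vectors a^{j,i} with φ*(a^{j,i}) = 1, satisfying Q_{j+1}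 ⊆ Q_j and 𝔅^φ ⊆ Q_j ⊆ (1+ε_j)·𝔅^φ. Define Λ_j = {x ∈ ℝⁿ : ‖x‖₁ ≤ μ, (a^{j,i})ᵀ(Mᵀ(Ax − y)) ≤ ρ* for all i ∈ I_j}. Then d^H(Λ*, Λ_j) → 0 as j → ∞. -/
open Matrix Filter Topology Pointwise

/-- The Hausdorff distance (w.r.t. the Euclidean norm) between subsets of `Fin n → ℝ`. -/
noncomputable def hausdorffD {n : ℕ} (S T : Set (Fin n → ℝ)) : ℝ :=
  max (sSup {d : ℝ | ∃ u ∈ S, d = sInf {e : ℝ | ∃ z ∈ T, e = l2norm (u - z)}})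
      (sSup {d : ℝ | ∃ z ∈ T, d = sInf {e : ℝ | ∃ u ∈ S, e = l2norm (u - z)}})

/-- `φ` is a norm on `Fin q → ℝ`. -/
structure IsNorm {q : ℕ} (φ : (Fin q → ℝ) → ℝ) : Prop where
  nonneg : ∀ x, 0 ≤ φ x
  eq_zero_iff : ∀ x, φ x = 0 ↔ x = 0
  smul_eq : ∀ (c : ℝ) (x), φ (c • x) = |c| * φ x
  triangle : ∀ x y, φ (x + y) ≤ φ x + φ y

/-- The dual norm `φ*(u) = sup {uᵀx : φ(x) ≤ 1}`. -/
noncomputable def dualNorm {q : ℕ} (φ : (Fin q → ℝ) → ℝ) (u : Fin q → ℝ) : ℝ :=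
  sSup {t : ℝ | ∃ x : Fin q → ℝ, φ x ≤ 1 ∧ t = ∑ i, u i * x i}

/-- The `i`-th standard basis vector of `ℝ^q`. -/
def stdBasis {q : ℕ} (i : Fin q) : Fin q → ℝ := fun j => if j = i then 1 else 0

theorem dotProduct_inv_smul_le_one_iff {q : ℕ} (a v : Fin q → ℝ) {t : ℝ} (ht : 0 < t) :
    a ⬝ᵥ (t⁻¹ • v) ≤ 1 ↔ a ⬝ᵥ v ≤ t := by
  rw [dotProduct_smul, smul_eq_mul, inv_mul_le_iff₀ ht, mul_one]

namespace IsNorm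

variable {q : ℕ} {φ : (Fin q → ℝ) → ℝ}

theorem convexOn (hφ : IsNorm φ) : ConvexOn ℝ Set.univ φ := by
  refine ⟨convex_univ, fun x _ z _ s t hs ht _ => ?_⟩
  calc φ (s • x + t • z) ≤ φ (s • x) + φ (t • z) := hφ.triangle _ _
    _ = s * φ x + t * φ z := by rw [hφ.smul_eq, hφ.smul_eq, abs_of_nonneg hs, abs_of_nonneg ht]
    _ = s • φ x + t • φ z := rfl

theorem continuous (hφ : IsNorm φ) : Continuous φ :=
  continuousOn_univ.mp (hφ.convexOn.continuousOn isOpen_univ)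

theorem inv_smul_le_one_iff (hφ : IsNorm φ) {t : ℝ} (ht : 0 < t) (v : Fin q → ℝ) :
    φ (t⁻¹ • v) ≤ 1 ↔ φ v ≤ t := by
  rw [hφ.smul_eq, abs_of_pos (inv_pos.2 ht), inv_mul_le_iff₀ ht, mul_one]

variable {ι : Type*} {a : ι → Fin q → ℝ}

theorem dotProduct_le_of_ball_subset (hφ : IsNorm φ)
    (hBQ : {u | φ u ≤ 1} ⊆ {u | ∀ i, a i ⬝ᵥ u ≤ 1}) (i : ι) (v : Fin q → ℝ) :
    a i ⬝ᵥ v ≤ φ v := by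
  refine le_of_forall_gt_imp_ge_of_dense fun t ht => ?_
  have ht₀ : 0 < t := (hφ.nonneg v).trans_lt ht
  have hv : t⁻¹ • v ∈ {u | φ u ≤ 1} := (hφ.inv_smul_le_one_iff ht₀ v).2 ht.le
  exact (dotProduct_inv_smul_le_one_iff _ _ ht₀).1 (hBQ hv i)

theorem le_mul_of_subset_smul_ball (hφ : IsNorm φ) {c : ℝ} (hc : 0 < c)
    (hQB : {u | ∀ i, a i ⬝ᵥ u ≤ 1} ⊆ c • {u | φ u ≤ 1}) {ρ : ℝ} (hρ : 0 ≤ ρ)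
    {v : Fin q → ℝ} (hv : ∀ i, a i ⬝ᵥ v ≤ ρ) : φ v ≤ c * ρ := by
  refine le_of_forall_gt_imp_ge_of_dense fun s hs => ?_
  have hs₀ : 0 < s := (mul_nonneg hc.le hρ).trans_lt hs
  have hvQ : s⁻¹ • (c • v) ∈ {u | ∀ i, a i ⬝ᵥ u ≤ 1} := fun i =>
    (dotProduct_inv_smul_le_one_iff _ _ hs₀).2 <| by
      rw [dotProduct_smul, smul_eq_mul]
      exact (mul_le_mul_of_nonneg_left (hv i) hc.le).trans hs.le
  have hvB := (Set.mem_smul_set_iff_inv_smul_mem₀ hc.ne' _ _).1 (hQB hvQ)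
  rw [smul_comm, inv_smul_smul₀ hc.ne'] at hvB
  exact (hφ.inv_smul_le_one_iff hs₀ v).1 hvB

end IsNorm

theorem IsCompact.exists_pos_sublevel_subset_of_isOpen {X : Type*} [TopologicalSpace X]
    {K : Set X} (hK : IsCompact K) {f : X → ℝ} (hf : ContinuousOn f K) {ρ : ℝ} {U : Set X}
    (hU : IsOpen U) (hKU : {x | x ∈ K ∧ f x ≤ ρ} ⊆ U) :
    ∃ η > 0, {x | x ∈ K ∧ f x ≤ ρ + η} ⊆ U := by
  rcases (K \ U).eq_empty_or_nonempty with hempty | hne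
  · exact ⟨1, one_pos, fun x hx => by_contra fun hxU => hempty.subset ⟨hx.1, hxU⟩⟩
  obtain ⟨x₀, ⟨hx₀K, hx₀U⟩, hmin⟩ := (hK.diff hU).exists_isMinOn hne (hf.mono Set.sdiff_subset)
  have hgap : ρ < f x₀ := lt_of_not_ge fun h => hx₀U (hKU ⟨hx₀K, h⟩)
  refine ⟨(f x₀ - ρ) / 2, by linarith, fun x hx => by_contra fun hxU => ?_⟩
  have hx₀x : f x₀ ≤ f x := hmin ⟨hx.1, hxU⟩
  linarith [hx.2]

section

variable {n : ℕ}

theorem norm_le_l1norm (x : Fin n → ℝ) : ‖x‖ ≤ l1norm x :=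
  (pi_norm_le_iff_of_nonneg (Finset.sum_nonneg fun i _ => abs_nonneg (x i))).2 fun i =>
    Finset.single_le_sum (f := fun i => |x i|) (fun j _ => abs_nonneg (x j)) (Finset.mem_univ i)

theorem isCompact_setOf_l1norm_le (μ : ℝ) : IsCompact {x : Fin n → ℝ | l1norm x ≤ μ} :=
  Metric.isCompact_of_isClosed_isBounded
    (isClosed_le (by unfold l1norm; fun_prop) continuous_const)
    (isBounded_iff_forall_norm_le.2 ⟨μ, fun x hx => (norm_le_l1norm x).trans hx⟩)

theorem continuous_l2norm : Continuous (l2norm : (Fin n → ℝ) → ℝ) := by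
  unfold l2norm; fun_prop

theorem l2norm_nonneg (x : Fin n → ℝ) : 0 ≤ l2norm x := Real.sqrt_nonneg _

theorem hausdorffD_nonneg (S T : Set (Fin n → ℝ)) : 0 ≤ hausdorffD S T :=
  le_max_of_le_left <| Real.sSup_nonneg <| by
    rintro _ ⟨u, -, rfl⟩
    exact Real.sInf_nonneg (by rintro _ ⟨z, -, rfl⟩; exact l2norm_nonneg _)

theorem hausdorffD_le_of_subset {S T : Set (Fin n → ℝ)} (hST : S ⊆ T) {δ : ℝ} (hδ : 0 ≤ δ)
    (hT : ∀ z ∈ T, ∃ u ∈ S, l2norm (u - z) ≤ δ) : hausdorffD S T ≤ δ := by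
  have hbdd (P : Set (Fin n → ℝ)) (g : (Fin n → ℝ) → Fin n → ℝ) :
      BddBelow {e | ∃ z ∈ P, e = l2norm (g z)} :=
    ⟨0, by rintro _ ⟨z, -, rfl⟩; exact l2norm_nonneg _⟩
  refine max_le (Real.sSup_le ?_ hδ) (Real.sSup_le ?_ hδ)
  · rintro _ ⟨u, hu, rfl⟩
    refine (csInf_le (hbdd T (u - ·)) ⟨u, hST hu, rfl⟩).trans ?_
    simpa [l2norm] using hδ
  · rintro _ ⟨z, hz, rfl⟩
    obtain ⟨u, hu, huz⟩ := hT z hz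
    exact (csInf_le (hbdd S (· - z)) ⟨u, hu, rfl⟩).trans huz

theorem tendsto_hausdorffD_of_sublevel_squeeze {K : Set (Fin n → ℝ)} (hK : IsCompact K)
    {f : (Fin n → ℝ) → ℝ} (hf : ContinuousOn f K) {ρ : ℝ} {T : ℕ → Set (Fin n → ℝ)}
    {η : ℕ → ℝ} (hη : Tendsto η atTop (𝓝 0))
    (hlower : ∀ j, {x | x ∈ K ∧ f x ≤ ρ} ⊆ T j)
    (hupper : ∀ j, T j ⊆ {x | x ∈ K ∧ f x ≤ ρ + η j}) :
    Tendsto (fun j => hausdorffD {x | x ∈ K ∧ f x ≤ ρ} (T j)) atTop (𝓝 0) := by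
  set S := {x | x ∈ K ∧ f x ≤ ρ}
  refine tendsto_order.2 ⟨fun b hb => Eventually.of_forall fun j =>
    hb.trans_le (hausdorffD_nonneg _ _), fun δ hδ => ?_⟩
  have hU : IsOpen (⋃ u ∈ S, {x | l2norm (u - x) < δ / 2}) :=
    isOpen_biUnion fun u _ =>
      isOpen_lt (continuous_l2norm.comp (continuous_sub_left u)) continuous_const
  obtain ⟨θ, hθ, hθU⟩ := hK.exists_pos_sublevel_subset_of_isOpen hf hU fun u hu =>
    Set.mem_biUnion hu (by simpa [l2norm] using half_pos hδ)
  filter_upwards [hη.eventually (gt_mem_nhds hθ)] with j hj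
  refine (hausdorffD_le_of_subset (hlower j) (half_pos hδ).le fun z hz => ?_).trans_lt
    (half_lt_self hδ)
  obtain ⟨u, hu, huz⟩ := Set.mem_iUnion₂.1 <|
    hθU ⟨(hupper j hz).1, (hupper j hz).2.trans (by linarith)⟩
  exact ⟨u, hu, huz.le⟩

end

theorem LASSO_relaxation_hausdorff_convergence_general (m n q : ℕ)
    (A : Matrix (Fin m) (Fin n) ℝ) (M : Matrix (Fin m) (Fin q) ℝ)
    (y : Fin m → ℝ) (μ : ℝ)
    (φ : (Fin q → ℝ) → ℝ) (hφ : IsNorm φ)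
    (ρ : ℝ)
    (hρ : ρ = sInf {t : ℝ | ∃ x : Fin n → ℝ,
      l1norm x ≤ μ ∧ t = φ (Mᵀ.mulVec (A.mulVec x - y))})
    (ε : ℕ → ℝ) (hεpos : ∀ j, 0 < ε j)
    (hεlim : Tendsto ε atTop (𝓝 0))
    (N : ℕ → ℕ) (a : (j : ℕ) → Fin (N j) → (Fin q → ℝ))
    (hBQ : ∀ j, {u : Fin q → ℝ | φ u ≤ 1} ⊆
      {u : Fin q → ℝ | ∀ i, ∑ r, a j i r * u r ≤ 1})
    (hQB : ∀ j, {u : Fin q → ℝ | ∀ i, ∑ r, a j i r * u r ≤ 1} ⊆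
      (1 + ε j) • {u : Fin q → ℝ | φ u ≤ 1}) :
    Tendsto (fun j =>
        hausdorffD
          {x : Fin n → ℝ | l1norm x ≤ μ ∧ φ (Mᵀ.mulVec (A.mulVec x - y)) ≤ ρ}
          {x : Fin n → ℝ | l1norm x ≤ μ ∧
            ∀ i, ∑ r, a j i r * Mᵀ.mulVec (A.mulVec x - y) r ≤ ρ})
      atTop (𝓝 0) := by
  have hρ₀ : 0 ≤ ρ := hρ ▸ Real.sInf_nonneg (by rintro _ ⟨x, -, rfl⟩; exact hφ.nonneg _)
  have hf : Continuous fun x => φ (Mᵀ *ᵥ (A *ᵥ x - y)) := hφ.continuous.comp (by fun_prop)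
  have hερ : Tendsto (fun j => ε j * ρ) atTop (𝓝 0) := by simpa using hεlim.mul_const ρ
  refine tendsto_hausdorffD_of_sublevel_squeeze (isCompact_setOf_l1norm_le μ) hf.continuousOn
    hερ (fun j x hx => ⟨hx.1, fun i => ?_⟩) (fun j x hx => ⟨hx.1, ?_⟩)
  · exact (hφ.dotProduct_le_of_ball_subset (hBQ j) i _).trans hx.2
  · have hφv := hφ.le_mul_of_subset_smul_ball (by linarith [hεpos j]) (hQB j) hρ₀ hx.2
    linarith

/-- Lemma 5.1(ii): the relaxed LASSO solution sets `Λ_j` converge to the LASSO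
solution set `Λ*` in Hausdorff distance. -/
theorem LASSO_relaxation_hausdorff_convergence (m n q : ℕ)
    (A : Matrix (Fin m) (Fin n) ℝ) (M : Matrix (Fin m) (Fin q) ℝ)
    (y : Fin m → ℝ) (μ : ℝ) (hμ : 0 < μ)
    (φ : (Fin q → ℝ) → ℝ) (hφ : IsNorm φ)
    (hbasis : ∀ i : Fin q, φ (stdBasis i) = 1)
    (hdbasis : ∀ i : Fin q, dualNorm φ (stdBasis i) = 1)
    (ρ : ℝ)
    (hρ : ρ = sInf {t : ℝ | ∃ x : Fin n → ℝ,
      l1norm x ≤ μ ∧ t = φ (Mᵀ.mulVec (A.mulVec x - y))})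
    (ε : ℕ → ℝ) (hεpos : ∀ j, 0 < ε j) (hεanti : StrictAnti ε)
    (hεlim : Tendsto ε atTop (𝓝 0))
    (N : ℕ → ℕ) (a : (j : ℕ) → Fin (N j) → (Fin q → ℝ))
    (ha : ∀ j i, dualNorm φ (a j i) = 1)
    (hnested : ∀ j, {u : Fin q → ℝ | ∀ i, ∑ r, a (j + 1) i r * u r ≤ 1} ⊆
      {u : Fin q → ℝ | ∀ i, ∑ r, a j i r * u r ≤ 1})
    (hBQ : ∀ j, {u : Fin q → ℝ | φ u ≤ 1} ⊆
      {u : Fin q → ℝ | ∀ i, ∑ r, a j i r * u r ≤ 1})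
    (hQB : ∀ j, {u : Fin q → ℝ | ∀ i, ∑ r, a j i r * u r ≤ 1} ⊆
      (1 + ε j) • {u : Fin q → ℝ | φ u ≤ 1}) :
    Tendsto (fun j =>
        hausdorffD
          {x : Fin n → ℝ | l1norm x ≤ μ ∧ φ (Mᵀ.mulVec (A.mulVec x - y)) ≤ ρ}
          {x : Fin n → ℝ | l1norm x ≤ μ ∧
            ∀ i, ∑ r, a j i r * Mᵀ.mulVec (A.mulVec x - y) r ≤ ρ})
      atTop (𝓝 0) :=
  LASSO_relaxation_hausdorff_convergence_general m n q A M y μ φ hφ ρ hρ ε hεpos hεlim N a hBQ hQB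
end
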